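/- For every extended LTL formula φ containing no limit operators (no GF- or FG-subformulas), each of the formulas GF φ and FG φ is equivalent to an extended LTL formula in normal form with at most 3^{‖φ‖} · ‖φ‖ nodes. -/

import Mathlib

namespace ExtLTL

/-- Extended LTL formulas, with the limit operators `GF` and `FG` as atomic
operators. -/
inductive E (Ap : Type) : Type
  | tt    : E Ap
  | ff    : E Ap
  | pos   : Ap → E Ap
  | nlit  : Ap → E Ap
  | and   : E Ap → E Ap → E Ap
  | or    : E Ap → E Ap → E Ap
  | next  : E Ap → E Ap
  | untl  : E Ap → E Ap → E Ap
  | wuntl : E Ap → E Ap → E Ap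
  | gf    : E Ap → E Ap
  | fg    : E Ap → E Ap
  deriving DecidableEq

/-- Infinite words over the alphabet `2^Ap`. -/
abbrev Word (Ap : Type) := ℕ → Set Ap

/-- Suffix of a word starting at position `i`. -/
def suff {Ap : Type} (w : Word Ap) (i : ℕ) : Word Ap := fun n => w (n + i)

/-- Satisfaction relation for extended LTL. -/
def Sat {Ap : Type} : Word Ap → E Ap → Prop
  | _, E.tt => True
  | _, E.ff => False
  | w, E.pos a => a ∈ w 0
  | w, E.nlit a => a ∉ w 0
  | w, E.and φ ψ => Sat w φ ∧ Sat w ψ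
  | w, E.or φ ψ => Sat w φ ∨ Sat w ψ
  | w, E.next φ => Sat (suff w 1) φ
  | w, E.untl φ ψ => ∃ k, Sat (suff w k) ψ ∧ ∀ j < k, Sat (suff w j) φ
  | w, E.wuntl φ ψ => (∀ k, Sat (suff w k) φ) ∨ ∃ k, Sat (suff w k) ψ ∧ ∀ j < k, Sat (suff w j) φ
  | w, E.gf φ => ∀ i : ℕ, ∃ j : ℕ, i ≤ j ∧ Sat (suff w j) φ
  | w, E.fg φ => ∃ i : ℕ, ∀ j : ℕ, i ≤ j → Sat (suff w j) φ

/-- Equivalence of extended LTL formulas. -/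
def Equiv {Ap : Type} (φ ψ : E Ap) : Prop := ∀ w : Word Ap, Sat w φ ↔ Sat w ψ

/-- G φ := φ W ff. -/
def Gf {Ap : Type} (φ : E Ap) : E Ap := E.wuntl φ E.ff

/-- Number of nodes of the syntax tree. -/
def size {Ap : Type} : E Ap → ℕ
  | E.tt => 1
  | E.ff => 1
  | E.pos _ => 1
  | E.nlit _ => 1
  | E.and φ ψ => size φ + size ψ + 1
  | E.or φ ψ => size φ + size ψ + 1
  | E.next φ => size φ + 1
  | E.untl φ ψ => size φ + size ψ + 1
  | E.wuntl φ ψ => size φ + size ψ + 1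
  | E.gf φ => size φ + 1
  | E.fg φ => size φ + 1

variable {Ap : Type}

/-- Does the formula contain a `U`-node? -/
def hasU : E Ap → Bool
  | E.untl _ _ => true
  | E.wuntl φ ψ => hasU φ || hasU ψ
  | E.and φ ψ => hasU φ || hasU ψ
  | E.or φ ψ => hasU φ || hasU ψ
  | E.next φ => hasU φ
  | E.gf φ => hasU φ
  | E.fg φ => hasU φ
  | _ => false

/-- Does the formula contain a `W`-node? -/
def hasW : E Ap → Bool
  | E.wuntl _ _ => true
  | E.untl φ ψ => hasW φ || hasW ψ
  | E.and φ ψ => hasW φ || hasW ψ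
  | E.or φ ψ => hasW φ || hasW ψ
  | E.next φ => hasW φ
  | E.gf φ => hasW φ
  | E.fg φ => hasW φ
  | _ => false

/-- Does the formula contain a limit node? -/
def hasLimit : E Ap → Bool
  | E.gf _ => true
  | E.fg _ => true
  | E.untl φ ψ => hasLimit φ || hasLimit ψ
  | E.wuntl φ ψ => hasLimit φ || hasLimit ψ
  | E.and φ ψ => hasLimit φ || hasLimit ψ
  | E.or φ ψ => hasLimit φ || hasLimit ψ
  | E.next φ => hasLimit φ
  | _ => false

/-- Condition (1) of the normal form: no `U`-node is below a `W`-node. -/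
def noUunderW : E Ap → Prop
  | E.wuntl φ ψ => hasU φ = false ∧ hasU ψ = false
  | E.untl φ ψ => noUunderW φ ∧ noUunderW ψ
  | E.and φ ψ => noUunderW φ ∧ noUunderW ψ
  | E.or φ ψ => noUunderW φ ∧ noUunderW ψ
  | E.next φ => noUunderW φ
  | E.gf φ => noUunderW φ
  | E.fg φ => noUunderW φ
  | _ => True

/-- Condition (2) of the normal form: no limit node is below another temporal
node. -/
def noLimitUnderTemporal : E Ap → Prop
  | E.and φ ψ => noLimitUnderTemporal φ ∧ noLimitUnderTemporal ψ
  | E.or φ ψ => noLimitUnderTemporal φ ∧ noLimitUnderTemporal ψ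
  | E.next φ => hasLimit φ = false
  | E.untl φ ψ => hasLimit φ = false ∧ hasLimit ψ = false
  | E.wuntl φ ψ => hasLimit φ = false ∧ hasLimit ψ = false
  | E.gf φ => hasLimit φ = false
  | E.fg φ => hasLimit φ = false
  | _ => True

/-- Condition (3) of the normal form: no `W`-node is below a `GF`-node and no
`U`-node is below an `FG`-node. -/
def noWunderGF : E Ap → Prop
  | E.and φ ψ => noWunderGF φ ∧ noWunderGF ψ
  | E.or φ ψ => noWunderGF φ ∧ noWunderGF ψ
  | E.next φ => noWunderGF φ
  | E.untl φ ψ => noWunderGF φ ∧ noWunderGF ψ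
  | E.wuntl φ ψ => noWunderGF φ ∧ noWunderGF ψ
  | E.gf φ => hasW φ = false ∧ noWunderGF φ
  | E.fg φ => hasU φ = false ∧ noWunderGF φ
  | _ => True

/-- Normal form (Definition of normal form in the paper). -/
def NormalForm (φ : E Ap) : Prop :=
  noUunderW φ ∧ noLimitUnderTemporal φ ∧ noWunderGF φ


/-!
Fix a word `w`. Call a W-subformula `a W b` of `φ` *persistent* if `w ⊨ FG a`, and a
U-subformula `a U b` *recurrent* if `w ⊨ GF b`. Replacing the persistent W-subformulas by `tt`
and the other ones by `a U b` yields a W-free formula `φ[M]_μ`; replacing the recurrent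
U-subformulas by `a W b` and the other ones by `ff` yields a U-free formula `φ[N]_ν`. From some
position on, both are equivalent to `φ` along `w`. Conversely, for any advice `(M, N)` whose
certificates `FG a[N]_ν` (for `a W b ∈ M`) and `GF b[M]_μ` (for `a U b ∈ N`) hold, `φ[M]_μ` and
`φ[N]_ν` eventually imply `φ`. Hence `GF φ` is the disjunction over all advice of
`GF φ[M]_μ ∧ certificates`, and `FG φ` that of `FG φ[N]_ν ∧ certificates`. With `r` binary
temporal nodes, `2r < ‖φ‖`, there are `2^r` disjuncts of at most `(r + 1)(‖φ‖ + 2)` nodes each.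
-/

open Filter

theorem suff_suff (w : Word Ap) (i j : ℕ) : suff (suff w i) j = suff w (j + i) := by
  funext n
  simp [suff, Nat.add_assoc]

theorem sat_suff_next {w : Word Ap} {j : ℕ} {a : E Ap} :
    Sat (suff w j) (E.next a) ↔ Sat (suff w (1 + j)) a := by
  simp [Sat, suff_suff]

theorem sat_suff_untl {w : Word Ap} {j : ℕ} {a b : E Ap} :
    Sat (suff w j) (E.untl a b) ↔
      ∃ k, Sat (suff w (k + j)) b ∧ ∀ i < k, Sat (suff w (i + j)) a := by
  simp [Sat, suff_suff]

theorem sat_suff_wuntl {w : Word Ap} {j : ℕ} {a b : E Ap} :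
    Sat (suff w j) (E.wuntl a b) ↔ (∀ k, Sat (suff w (k + j)) a) ∨
      ∃ k, Sat (suff w (k + j)) b ∧ ∀ i < k, Sat (suff w (i + j)) a := by
  simp [Sat, suff_suff]

theorem sat_gf_iff_frequently {w : Word Ap} {x : E Ap} :
    Sat w (E.gf x) ↔ ∃ᶠ j in atTop, Sat (suff w j) x :=
  frequently_atTop.symm

theorem sat_fg_iff_eventually {w : Word Ap} {x : E Ap} :
    Sat w (E.fg x) ↔ ∀ᶠ j in atTop, Sat (suff w j) x :=
  eventually_atTop.symm

theorem sat_untl_of_sat_wuntl {w : Word Ap} {a b : E Ap} (h : Sat w (E.wuntl a b))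
    (hb : ∃ k, Sat (suff w k) b) : Sat w (E.untl a b) := by
  rcases h with ha | h
  · obtain ⟨k, hk⟩ := hb
    exact ⟨k, hk, fun j _ => ha j⟩
  · exact h

theorem sat_wuntl_of_sat_untl {w : Word Ap} {a b : E Ap} (h : Sat w (E.untl a b)) :
    Sat w (E.wuntl a b) :=
  Or.inr h

section EntailsFrom

def EntailsFrom (w : Word Ap) (i : ℕ) (x y : E Ap) : Prop :=
  ∀ j, i ≤ j → Sat (suff w j) x → Sat (suff w j) y

variable {w : Word Ap} {i : ℕ} {x y a b a' b' : E Ap}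

namespace EntailsFrom

theorem refl : EntailsFrom w i x x := fun _ _ => id

theorem and (ha : EntailsFrom w i a a') (hb : EntailsFrom w i b b') :
    EntailsFrom w i (E.and a b) (E.and a' b') :=
  fun j hj h => ⟨ha j hj h.1, hb j hj h.2⟩

theorem or (ha : EntailsFrom w i a a') (hb : EntailsFrom w i b b') :
    EntailsFrom w i (E.or a b) (E.or a' b') :=
  fun j hj h => h.imp (ha j hj) (hb j hj)

theorem next (ha : EntailsFrom w i a a') : EntailsFrom w i (E.next a) (E.next a') := by
  intro j hj h
  rw [sat_suff_next] at h ⊢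
  exact ha _ (by omega) h

theorem untl (ha : EntailsFrom w i a a') (hb : EntailsFrom w i b b') :
    EntailsFrom w i (E.untl a b) (E.untl a' b') := by
  intro j hj h
  rw [sat_suff_untl] at h ⊢
  obtain ⟨k, hk, hlt⟩ := h
  exact ⟨k, hb _ (by omega) hk, fun l hl => ha _ (by omega) (hlt l hl)⟩

theorem wuntl (ha : EntailsFrom w i a a') (hb : EntailsFrom w i b b') :
    EntailsFrom w i (E.wuntl a b) (E.wuntl a' b') := by
  intro j hj h
  rw [sat_suff_wuntl] at h ⊢
  refine h.imp (fun hG k => ha _ (by omega) (hG k)) fun ⟨k, hk, hlt⟩ => ?_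
  exact ⟨k, hb _ (by omega) hk, fun l hl => ha _ (by omega) (hlt l hl)⟩

theorem eventually (h : EntailsFrom w i x y) :
    ∀ᶠ j in atTop, Sat (suff w j) x → Sat (suff w j) y :=
  eventually_atTop.2 ⟨i, h⟩

theorem sat_gf (h : EntailsFrom w i x y) (hx : Sat w (E.gf x)) : Sat w (E.gf y) := by
  rw [sat_gf_iff_frequently] at hx ⊢
  exact hx.mp h.eventually

theorem sat_fg (h : EntailsFrom w i x y) (hx : Sat w (E.fg x)) : Sat w (E.fg y) := by
  rw [sat_fg_iff_eventually] at hx ⊢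
  exact hx.mp h.eventually

end EntailsFrom

end EntailsFrom

open Classical in
/-- `φ[M]_μ` of the paper, with a W-subformula `a W b` recorded in `M` as the pair `(a, b)`. -/
noncomputable def substMu (M : List (E Ap × E Ap)) : E Ap → E Ap
  | E.and a b => E.and (substMu M a) (substMu M b)
  | E.or a b => E.or (substMu M a) (substMu M b)
  | E.next a => E.next (substMu M a)
  | E.untl a b => E.untl (substMu M a) (substMu M b)
  | E.wuntl a b => if (a, b) ∈ M then E.tt else E.untl (substMu M a) (substMu M b)
  | x => x

open Classical in
/-- `φ[N]_ν` of the paper, with a U-subformula `a U b` recorded in `N` as the pair `(a, b)`. -/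
noncomputable def substNu (N : List (E Ap × E Ap)) : E Ap → E Ap
  | E.and a b => E.and (substNu N a) (substNu N b)
  | E.or a b => E.or (substNu N a) (substNu N b)
  | E.next a => E.next (substNu N a)
  | E.untl a b => if (a, b) ∈ N then E.wuntl (substNu N a) (substNu N b) else E.ff
  | E.wuntl a b => E.wuntl (substNu N a) (substNu N b)
  | x => x

section Soundness

variable {M N : List (E Ap × E Ap)} {w : Word Ap} {i : ℕ}

theorem subst_entailsFrom_self (hM : ∀ p ∈ M, ∀ j, i ≤ j → Sat (suff w j) (substNu N p.1))
    (hN : ∀ p ∈ N, Sat w (E.gf (substMu M p.2))) (x : E Ap) :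
    EntailsFrom w i (substMu M x) x ∧ EntailsFrom w i (substNu N x) x := by
  induction x with
  | and a b iha ihb => exact ⟨iha.1.and ihb.1, iha.2.and ihb.2⟩
  | or a b iha ihb => exact ⟨iha.1.or ihb.1, iha.2.or ihb.2⟩
  | next a ih => exact ⟨ih.1.next, ih.2.next⟩
  | untl a b iha ihb =>
    refine ⟨iha.1.untl ihb.1, ?_⟩
    by_cases hab : (a, b) ∈ N
    · have hb : Sat w (E.gf b) := ihb.1.sat_gf (hN _ hab)
      rw [substNu, if_pos hab]
      intro j hj h
      obtain ⟨k, hjk, hk⟩ := hb j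
      refine sat_untl_of_sat_wuntl (iha.2.wuntl ihb.2 j hj h) ⟨k - j, ?_⟩
      rwa [suff_suff, Nat.sub_add_cancel hjk]
    · rw [substNu, if_neg hab]
      exact fun _ _ h => h.elim
  | wuntl a b iha ihb =>
    refine ⟨?_, iha.2.wuntl ihb.2⟩
    by_cases hab : (a, b) ∈ M
    · rw [substMu, if_pos hab]
      intro j hj _
      refine Or.inl fun k => ?_
      rw [suff_suff]
      exact iha.2 _ (by omega) (hM _ hab _ (by omega))
    · rw [substMu, if_neg hab]
      exact fun j hj h => sat_wuntl_of_sat_untl (iha.1.untl ihb.1 j hj h)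
  | _ => exact ⟨.refl, .refl⟩

theorem exists_subst_entailsFrom_self (hM : ∀ p ∈ M, Sat w (E.fg (substNu N p.1)))
    (hN : ∀ p ∈ N, Sat w (E.gf (substMu M p.2))) (x : E Ap) :
    ∃ i, EntailsFrom w i (substMu M x) x ∧ EntailsFrom w i (substNu N x) x := by
  have hM' : ∀ᶠ j in atTop, ∀ p ∈ M, Sat (suff w j) (substNu N p.1) :=
    (eventually_all_finite M.finite_toSet).2 fun p hp => sat_fg_iff_eventually.1 (hM p hp)
  obtain ⟨i, hi⟩ := eventually_atTop.1 hM'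
  exact ⟨i, subst_entailsFrom_self (fun p hp j hj => hi j hj p hp) hN x⟩

end Soundness

def weakUntilArgs : E Ap → List (E Ap × E Ap)
  | E.and a b | E.or a b | E.untl a b => weakUntilArgs a ++ weakUntilArgs b
  | E.wuntl a b => (a, b) :: (weakUntilArgs a ++ weakUntilArgs b)
  | E.next a | E.gf a | E.fg a => weakUntilArgs a
  | _ => []

def untilArgs : E Ap → List (E Ap × E Ap)
  | E.and a b | E.or a b | E.wuntl a b => untilArgs a ++ untilArgs b
  | E.untl a b => (a, b) :: (untilArgs a ++ untilArgs b)
  | E.next a | E.gf a | E.fg a => untilArgs a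
  | _ => []

theorem fst_of_mem_weakUntilArgs {x : E Ap} {p : E Ap × E Ap} (hp : p ∈ weakUntilArgs x) :
    weakUntilArgs p.1 ⊆ weakUntilArgs x ∧ untilArgs p.1 ⊆ untilArgs x ∧ size p.1 < size x ∧
      (hasLimit x = false → hasLimit p.1 = false) := by
  induction x <;>
    simp only [weakUntilArgs, untilArgs, size, hasLimit, List.mem_append, List.mem_cons,
      List.not_mem_nil, Bool.or_eq_false_iff] at hp ⊢ <;>
    grind [List.subset_append_of_subset_left, List.subset_append_of_subset_right,
      List.subset_cons_of_subset]

theorem snd_of_mem_untilArgs {x : E Ap} {p : E Ap × E Ap} (hp : p ∈ untilArgs x) :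
    weakUntilArgs p.2 ⊆ weakUntilArgs x ∧ untilArgs p.2 ⊆ untilArgs x ∧ size p.2 < size x ∧
      (hasLimit x = false → hasLimit p.2 = false) := by
  induction x <;>
    simp only [weakUntilArgs, untilArgs, size, hasLimit, List.mem_append, List.mem_cons,
      List.not_mem_nil, Bool.or_eq_false_iff] at hp ⊢ <;>
    grind [List.subset_append_of_subset_left, List.subset_append_of_subset_right,
      List.subset_cons_of_subset]

theorem two_mul_length_args_lt_size (x : E Ap) :
    2 * ((weakUntilArgs x).length + (untilArgs x).length) < size x := by
  induction x <;>
    simp only [weakUntilArgs, untilArgs, size, List.length_append, List.length_cons,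
      List.length_nil] <;>
    omega

section Completeness

variable {W₀ U₀ M N : List (E Ap × E Ap)} {w : Word Ap} {i : ℕ}

theorem self_entailsFrom_subst (hM : ∀ p ∈ W₀, Sat w (E.fg p.1) → p ∈ M)
    (hN : ∀ p ∈ U₀, p ∉ N → ∀ j, i ≤ j → ¬ Sat (suff w j) p.2) (x : E Ap)
    (hW : weakUntilArgs x ⊆ W₀) (hU : untilArgs x ⊆ U₀) :
    EntailsFrom w i x (substMu M x) ∧ EntailsFrom w i x (substNu N x) := by
  induction x with
  | and a b iha ihb =>
    simp only [weakUntilArgs, untilArgs, List.append_subset] at hW hU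
    specialize iha hW.1 hU.1
    specialize ihb hW.2 hU.2
    exact ⟨iha.1.and ihb.1, iha.2.and ihb.2⟩
  | or a b iha ihb =>
    simp only [weakUntilArgs, untilArgs, List.append_subset] at hW hU
    specialize iha hW.1 hU.1
    specialize ihb hW.2 hU.2
    exact ⟨iha.1.or ihb.1, iha.2.or ihb.2⟩
  | next a ih =>
    specialize ih hW hU
    exact ⟨ih.1.next, ih.2.next⟩
  | untl a b iha ihb =>
    simp only [weakUntilArgs, untilArgs, List.append_subset, List.cons_subset] at hW hU
    specialize iha hW.1 hU.2.1
    specialize ihb hW.2 hU.2.2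
    refine ⟨iha.1.untl ihb.1, ?_⟩
    by_cases hab : (a, b) ∈ N
    · rw [substNu, if_pos hab]
      exact fun j hj h => iha.2.wuntl ihb.2 j hj (sat_wuntl_of_sat_untl h)
    · rw [substNu, if_neg hab]
      intro j hj h
      obtain ⟨k, hk, -⟩ := sat_suff_untl.1 h
      exact hN _ hU.1 hab _ (by omega) hk
  | wuntl a b iha ihb =>
    simp only [weakUntilArgs, untilArgs, List.append_subset, List.cons_subset] at hW hU
    specialize iha hW.2.1 hU.1
    specialize ihb hW.2.2 hU.2
    refine ⟨?_, iha.2.wuntl ihb.2⟩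
    by_cases hab : (a, b) ∈ M
    · rw [substMu, if_pos hab]
      exact fun _ _ _ => trivial
    · rw [substMu, if_neg hab]
      intro j hj h
      refine iha.1.untl ihb.1 j hj (h.resolve_left fun hG => hab (hM _ hW.1 ⟨j, fun k hk => ?_⟩))
      simpa [suff_suff, Nat.sub_add_cancel hk] using hG (k - j)
  | _ => exact ⟨.refl, .refl⟩

end Completeness

def advice (φ : E Ap) : List (List (E Ap × E Ap) × List (E Ap × E Ap)) :=
  (weakUntilArgs φ).sublists ×ˢ (untilArgs φ).sublists

theorem mem_advice {φ : E Ap} {M N : List (E Ap × E Ap)} :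
    (M, N) ∈ advice φ ↔ M.Sublist (weakUntilArgs φ) ∧ N.Sublist (untilArgs φ) := by
  simp [advice]

theorem length_advice (φ : E Ap) :
    (advice φ).length = 2 ^ ((weakUntilArgs φ).length + (untilArgs φ).length) := by
  rw [advice, List.length_product, List.length_sublists, List.length_sublists, pow_add]

theorem exists_advice (φ : E Ap) (w : Word Ap) :
    ∃ M N, (M, N) ∈ advice φ ∧ (∀ p ∈ M, Sat w (E.fg (substNu N p.1))) ∧
      (∀ p ∈ N, Sat w (E.gf (substMu M p.2))) ∧
      ∃ i, EntailsFrom w i φ (substMu M φ) ∧ EntailsFrom w i φ (substNu N φ) := by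
  classical
  set M := (weakUntilArgs φ).filter fun p => Sat w (E.fg p.1)
  set N := (untilArgs φ).filter fun p => Sat w (E.gf p.2)
  have hM : ∀ p ∈ weakUntilArgs φ, Sat w (E.fg p.1) → p ∈ M := fun p hp h =>
    List.mem_filter.2 ⟨hp, decide_eq_true h⟩
  have hN : ∀ p ∈ untilArgs φ, ∀ᶠ j in atTop, p ∉ N → ¬ Sat (suff w j) p.2 := by
    intro p hp
    refine eventually_imp_distrib_left.2 fun hpN => ?_
    have : ¬ Sat w (E.gf p.2) := fun h => hpN (List.mem_filter.2 ⟨hp, decide_eq_true h⟩)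
    rwa [sat_gf_iff_frequently, not_frequently] at this
  obtain ⟨i, hi⟩ := eventually_atTop.1 ((eventually_all_finite (untilArgs φ).finite_toSet).2 hN)
  have hC := self_entailsFrom_subst (i := i) hM fun p hp hpN j hj => hi j hj p hp hpN
  refine ⟨M, N, mem_advice.2 ⟨List.filter_sublist, List.filter_sublist⟩, ?_, ?_,
    i, hC φ (List.Subset.refl _) (List.Subset.refl _)⟩
  · intro p hp
    obtain ⟨hpW, hfg⟩ := List.mem_filter.1 hp
    obtain ⟨hW, hU, -⟩ := fst_of_mem_weakUntilArgs hpW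
    exact (hC p.1 hW hU).2.sat_fg (of_decide_eq_true hfg)
  · intro p hp
    obtain ⟨hpU, hgf⟩ := List.mem_filter.1 hp
    obtain ⟨hW, hU, -⟩ := snd_of_mem_untilArgs hpU
    exact (hC p.2 hW hU).1.sat_gf (of_decide_eq_true hgf)

def bigAnd : List (E Ap) → E Ap
  | [] => E.tt
  | [x] => x
  | x :: y :: t => E.and x (bigAnd (y :: t))

def bigOr : List (E Ap) → E Ap
  | [] => E.ff
  | [x] => x
  | x :: y :: t => E.or x (bigOr (y :: t))

theorem sat_bigAnd {w : Word Ap} : ∀ {L : List (E Ap)}, Sat w (bigAnd L) ↔ ∀ x ∈ L, Sat w x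
  | [] => by simp [bigAnd, Sat]
  | [x] => by simp [bigAnd]
  | x :: y :: t => by simp [bigAnd, Sat, sat_bigAnd (L := y :: t)]

theorem sat_bigOr {w : Word Ap} : ∀ {L : List (E Ap)}, Sat w (bigOr L) ↔ ∃ x ∈ L, Sat w x
  | [] => by simp [bigOr, Sat]
  | [x] => by simp [bigOr]
  | x :: y :: t => by simp [bigOr, Sat, sat_bigOr (L := y :: t)]

theorem size_bigAnd_add_one_le {c : ℕ} :
    ∀ {L : List (E Ap)}, L ≠ [] → (∀ x ∈ L, size x + 1 ≤ c) → size (bigAnd L) + 1 ≤ c * L.length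
  | [x], _, h => by simpa [bigAnd] using h x
  | x :: y :: t, _, h => by
    have hx := h x (by simp)
    have ht := size_bigAnd_add_one_le (L := y :: t) (by simp) fun z hz => h z (by simp [hz])
    simp only [bigAnd, size, List.length_cons] at ht ⊢
    nlinarith

theorem size_bigOr_add_one_le {c : ℕ} :
    ∀ {L : List (E Ap)}, L ≠ [] → (∀ x ∈ L, size x + 1 ≤ c) → size (bigOr L) + 1 ≤ c * L.length
  | [x], _, h => by simpa [bigOr] using h x
  | x :: y :: t, _, h => by
    have hx := h x (by simp)
    have ht := size_bigOr_add_one_le (L := y :: t) (by simp) fun z hz => h z (by simp [hz])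
    simp only [bigOr, size, List.length_cons] at ht ⊢
    nlinarith

theorem NormalForm.and {a b : E Ap} (ha : NormalForm a) (hb : NormalForm b) :
    NormalForm (E.and a b) :=
  ⟨⟨ha.1, hb.1⟩, ⟨ha.2.1, hb.2.1⟩, ⟨ha.2.2, hb.2.2⟩⟩

theorem NormalForm.or {a b : E Ap} (ha : NormalForm a) (hb : NormalForm b) :
    NormalForm (E.or a b) :=
  ⟨⟨ha.1, hb.1⟩, ⟨ha.2.1, hb.2.1⟩, ⟨ha.2.2, hb.2.2⟩⟩

theorem normalForm_bigAnd : ∀ {L : List (E Ap)}, (∀ x ∈ L, NormalForm x) → NormalForm (bigAnd L)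
  | [], _ => ⟨trivial, trivial, trivial⟩
  | [x], h => h x (by simp)
  | x :: y :: t, h => (h x (by simp)).and (normalForm_bigAnd fun z hz => h z (by simp [hz]))

theorem normalForm_bigOr : ∀ {L : List (E Ap)}, (∀ x ∈ L, NormalForm x) → NormalForm (bigOr L)
  | [], _ => ⟨trivial, trivial, trivial⟩
  | [x], h => h x (by simp)
  | x :: y :: t, h => (h x (by simp)).or (normalForm_bigOr fun z hz => h z (by simp [hz]))

theorem noUunderW_of_hasW_eq_false {x : E Ap} (hx : hasW x = false) : noUunderW x := by
  induction x <;> simp_all [noUunderW, hasW]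

theorem noUunderW_of_hasU_eq_false {x : E Ap} (hx : hasU x = false) : noUunderW x := by
  induction x <;> simp_all [noUunderW, hasU]

theorem noWunderGF_of_hasLimit_eq_false {x : E Ap} (hx : hasLimit x = false) : noWunderGF x := by
  induction x <;> simp_all [noWunderGF, hasLimit]

theorem normalForm_gf {x : E Ap} (hW : hasW x = false) (hL : hasLimit x = false) :
    NormalForm (E.gf x) :=
  ⟨noUunderW_of_hasW_eq_false hW, hL, hW, noWunderGF_of_hasLimit_eq_false hL⟩

theorem normalForm_fg {x : E Ap} (hU : hasU x = false) (hL : hasLimit x = false) :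
    NormalForm (E.fg x) :=
  ⟨noUunderW_of_hasU_eq_false hU, hL, hU, noWunderGF_of_hasLimit_eq_false hL⟩

section Substitution

variable (M : List (E Ap × E Ap)) {x : E Ap}

theorem hasW_substMu (hx : hasLimit x = false) : hasW (substMu M x) = false := by
  induction x <;> simp_all [substMu, hasW, hasLimit]
  split_ifs <;> simp_all [hasW]

theorem hasLimit_substMu (hx : hasLimit x = false) : hasLimit (substMu M x) = false := by
  induction x <;> simp_all [substMu, hasLimit]
  split_ifs <;> simp_all [hasLimit]

theorem hasU_substNu (hx : hasLimit x = false) : hasU (substNu M x) = false := by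
  induction x <;> simp_all [substNu, hasU, hasLimit]
  split_ifs <;> simp_all [hasU]

theorem hasLimit_substNu (hx : hasLimit x = false) : hasLimit (substNu M x) = false := by
  induction x <;> simp_all [substNu, hasLimit]
  split_ifs <;> simp_all [hasLimit]

theorem normalForm_gf_substMu (hx : hasLimit x = false) : NormalForm (E.gf (substMu M x)) :=
  normalForm_gf (hasW_substMu M hx) (hasLimit_substMu M hx)

theorem normalForm_fg_substNu (hx : hasLimit x = false) : NormalForm (E.fg (substNu M x)) :=
  normalForm_fg (hasU_substNu M hx) (hasLimit_substNu M hx)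

variable (x)

theorem size_substMu_le : size (substMu M x) ≤ size x := by
  induction x <;> simp only [substMu] <;> (try split_ifs) <;> simp only [size] <;> omega

theorem size_substNu_le : size (substNu M x) ≤ size x := by
  induction x <;> simp only [substNu] <;> (try split_ifs) <;> simp only [size] <;> omega

end Substitution

section AdviceDisjunction

variable (φ : E Ap) (head : List (E Ap × E Ap) → List (E Ap × E Ap) → E Ap)

noncomputable def certificates (M N : List (E Ap × E Ap)) : List (E Ap) :=
  M.map (fun p => E.fg (substNu N p.1)) ++ N.map (fun p => E.gf (substMu M p.2))

noncomputable def adviceDisjunction : E Ap :=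
  bigOr ((advice φ).map fun q => bigAnd (head q.1 q.2 :: certificates q.1 q.2))

theorem sat_adviceDisjunction {w : Word Ap} :
    Sat w (adviceDisjunction φ head) ↔ ∃ M N, (M, N) ∈ advice φ ∧ Sat w (head M N) ∧
      (∀ p ∈ M, Sat w (E.fg (substNu N p.1))) ∧ ∀ p ∈ N, Sat w (E.gf (substMu M p.2)) := by
  simp only [adviceDisjunction, sat_bigOr, List.mem_map, exists_exists_and_eq_and]
  simp only [Prod.exists, sat_bigAnd, List.forall_mem_cons, certificates, List.forall_mem_append,
    List.forall_mem_map]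

theorem normalForm_adviceDisjunction (hφ : hasLimit φ = false)
    (hhead : ∀ M N, NormalForm (head M N)) : NormalForm (adviceDisjunction φ head) := by
  refine normalForm_bigOr ?_
  simp only [List.mem_map, Prod.exists]
  rintro _ ⟨M, N, hMN, rfl⟩
  refine normalForm_bigAnd ?_
  simp only [certificates, List.mem_cons, List.mem_append, List.mem_map]
  rintro _ (rfl | ⟨p, hp, rfl⟩ | ⟨p, hp, rfl⟩)
  · exact hhead M N
  · exact normalForm_fg_substNu N
      ((fst_of_mem_weakUntilArgs ((mem_advice.1 hMN).1.subset hp)).2.2.2 hφ)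
  · exact normalForm_gf_substMu M
      ((snd_of_mem_untilArgs ((mem_advice.1 hMN).2.subset hp)).2.2.2 hφ)

theorem two_pow_mul_le_three_pow_mul {r n : ℕ} (h : 2 * r < n) :
    2 ^ r * ((r + 1) * (n + 2)) ≤ 3 ^ n * n := by
  have hr : (r + 1) * 2 ^ r ≤ 3 ^ (2 * r) :=
    calc (r + 1) * 2 ^ r ≤ 2 ^ r * 2 ^ r := Nat.mul_le_mul_right _ Nat.lt_two_pow_self
      _ = 4 ^ r := by rw [← mul_pow]; norm_num
      _ ≤ 9 ^ r := Nat.pow_le_pow_left (by norm_num) r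
      _ = 3 ^ (2 * r) := by rw [pow_mul]; norm_num
  calc 2 ^ r * ((r + 1) * (n + 2)) = (r + 1) * 2 ^ r * (n + 2) := by ring
    _ ≤ 3 ^ (2 * r) * (3 * n) := Nat.mul_le_mul hr (by omega)
    _ = 3 ^ (2 * r + 1) * n := by ring
    _ ≤ 3 ^ n * n := Nat.mul_le_mul_right _ (Nat.pow_le_pow_right (by norm_num) h)

theorem size_disjunct_add_one_le {M N : List (E Ap × E Ap)} (hMN : (M, N) ∈ advice φ)
    (hhead : size (head M N) ≤ size φ + 1) :
    size (bigAnd (head M N :: certificates M N)) + 1 ≤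
      ((weakUntilArgs φ).length + (untilArgs φ).length + 1) * (size φ + 2) := by
  obtain ⟨hM, hN⟩ := mem_advice.1 hMN
  have hconj : ∀ x ∈ head M N :: certificates M N, size x + 1 ≤ size φ + 2 := by
    simp only [certificates, List.mem_cons, List.mem_append, List.mem_map]
    rintro _ (rfl | ⟨p, hp, rfl⟩ | ⟨p, hp, rfl⟩)
    · omega
    · have := (fst_of_mem_weakUntilArgs (hM.subset hp)).2.2.1
      have := size_substNu_le N p.1
      simp only [size]
      omega
    · have := (snd_of_mem_untilArgs (hN.subset hp)).2.2.1
      have := size_substMu_le M p.2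
      simp only [size]
      omega
  have hlen : (head M N :: certificates M N).length ≤
      (weakUntilArgs φ).length + (untilArgs φ).length + 1 := by
    simp only [certificates, List.length_cons, List.length_append, List.length_map]
    have := hM.length_le
    have := hN.length_le
    omega
  calc _ ≤ (size φ + 2) * (head M N :: certificates M N).length :=
        size_bigAnd_add_one_le (List.cons_ne_nil _ _) hconj
    _ ≤ (size φ + 2) * ((weakUntilArgs φ).length + (untilArgs φ).length + 1) :=
        Nat.mul_le_mul_left _ hlen
    _ = _ := Nat.mul_comm _ _

theorem size_adviceDisjunction_le (hhead : ∀ M N, size (head M N) ≤ size φ + 1) :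
    size (adviceDisjunction φ head) ≤ 3 ^ size φ * size φ := by
  have hne : (advice φ).map (fun q => bigAnd (head q.1 q.2 :: certificates q.1 q.2)) ≠ [] := by
    simp [← List.length_pos_iff, length_advice]
  have hsize := size_bigOr_add_one_le hne <| List.forall_mem_map.2 fun q hq =>
    size_disjunct_add_one_le φ head hq (hhead q.1 q.2)
  rw [List.length_map, length_advice] at hsize
  have hcount := two_pow_mul_le_three_pow_mul (two_mul_length_args_lt_size φ)
  rw [adviceDisjunction]
  linarith

end AdviceDisjunction

theorem gf_equiv_adviceDisjunction (φ : E Ap) :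
    Equiv (E.gf φ) (adviceDisjunction φ fun M _ => E.gf (substMu M φ)) := by
  intro w
  rw [sat_adviceDisjunction]
  constructor
  · intro h
    obtain ⟨M, N, hMN, hM, hN, i, hμ, -⟩ := exists_advice φ w
    exact ⟨M, N, hMN, hμ.sat_gf h, hM, hN⟩
  · rintro ⟨M, N, -, h, hM, hN⟩
    obtain ⟨i, hμ, -⟩ := exists_subst_entailsFrom_self hM hN φ
    exact hμ.sat_gf h

theorem fg_equiv_adviceDisjunction (φ : E Ap) :
    Equiv (E.fg φ) (adviceDisjunction φ fun _ N => E.fg (substNu N φ)) := by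
  intro w
  rw [sat_adviceDisjunction]
  constructor
  · intro h
    obtain ⟨M, N, hMN, hM, hN, i, -, hν⟩ := exists_advice φ w
    exact ⟨M, N, hMN, hν.sat_fg h, hM, hN⟩
  · rintro ⟨M, N, -, h, hM, hN⟩
    obtain ⟨i, -, hν⟩ := exists_subst_entailsFrom_self hM hN φ
    exact hν.sat_fg h

theorem stage3_normalForm_general {Ap : Type} (φ : E Ap)
    (hφ : hasLimit φ = false) :
    (∃ χ : E Ap, NormalForm χ ∧ Equiv (E.gf φ) χ ∧ size χ ≤ 3 ^ size φ * size φ) ∧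
    (∃ χ : E Ap, NormalForm χ ∧ Equiv (E.fg φ) χ ∧ size χ ≤ 3 ^ size φ * size φ) := by
  refine ⟨⟨_, ?_, gf_equiv_adviceDisjunction φ, ?_⟩, ⟨_, ?_, fg_equiv_adviceDisjunction φ, ?_⟩⟩
  · exact normalForm_adviceDisjunction φ _ hφ fun M _ => normalForm_gf_substMu M hφ
  · exact size_adviceDisjunction_le φ _ fun M _ => by simpa [size] using size_substMu_le M φ
  · exact normalForm_adviceDisjunction φ _ hφ fun _ N => normalForm_fg_substNu N hφ
  · exact size_adviceDisjunction_le φ _ fun _ N => by simpa [size] using size_substNu_le N φ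

/-- Stage 3: for every extended LTL formula `φ` without limit
operators, each of `GF φ` and `FG φ` is equivalent to a formula in normal form
with at most `3^{‖φ‖}·‖φ‖` nodes. -/
theorem stage3_normalForm {Ap : Type} [Fintype Ap] (φ : E Ap)
    (hφ : hasLimit φ = false) :
    (∃ χ : E Ap, NormalForm χ ∧ Equiv (E.gf φ) χ ∧ size χ ≤ 3 ^ size φ * size φ) ∧
    (∃ χ : E Ap, NormalForm χ ∧ Equiv (E.fg φ) χ ∧ size χ ≤ 3 ^ size φ * size φ) :=
  stage3_normalForm_general φ hφ

end ExtLTL
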